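/- Let h be a nonnegative measurable function on [0,∞) with α := ∫₀^∞ h(t) dt < 1 and ∫₀^∞ x^r h(x) dx < ∞ for some r > 0. Then ∫₀^∞ x^r ψ(x) dx < ∞, where ψ = Σ_{n≥1} h^{*n}. Specifically, ∫₀^∞ x^r h^{*n}(x) dx ≤ n^{max(r,1)} α^{n-1} ∫₀^∞ x^r h(x) dx. -/

import Mathlib

open MeasureTheory intervalIntegral

/-- Convolution on `[0,∞)`: `(f*g)(t) = ∫₀ᵗ f(t-s) g(s) ds`. -/
noncomputable def conv (f g : ℝ → ℝ) (t : ℝ) : ℝ := ∫ s in (0:ℝ)..t, f (t - s) * g s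

/-- `convPow h n = h^{*(n+1)}`: the `(n+1)`-fold convolution power of `h`. -/
noncomputable def convPow (h : ℝ → ℝ) : ℕ → ℝ → ℝ
  | 0 => h
  | n + 1 => conv (convPow h n) h

/-!
Work with the `ℝ≥0∞`-valued moments `emoment r f = ∫₀^∞ x^r f(x) dx`, for which Tonelli's theorem
needs no integrability hypotheses. The shear `(x, s) ↦ (x - s, s)` bounds the `r`-th moment of
`f * g` by `∬_{u,v>0} (u+v)^r f(u) g(v) du dv`. With `p = max r 1`, convexity of `x ↦ x^p` (or
subadditivity of `x ↦ x^r` if `r ≤ 1`) gives `(u+v)^r ≤ ((a+b)/a)^(p-1) u^r + ((a+b)/b)^(p-1) v^r`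
for all weights `a, b > 0`. Splitting `h^{*(n+1)} = h^{*n} * h` with the weights `a = n`, `b = 1`,
the bound `n^p α^(n-1) ∫ x^r h` reproduces itself, because
`((n+1)/n)^(p-1) n^p + (n+1)^(p-1) = (n+1)^p`. For `α < 1` these bounds are summable, and monotone
convergence gives the integrability of `x^r ψ`.
-/

open Set
open scoped ENNReal

theorem measurable_setIntegral_Ioc {F : ℝ × ℝ → ℝ} (hF : Measurable F) {a b : ℝ → ℝ}
    (ha : Measurable a) (hb : Measurable b) :
    Measurable fun t => ∫ s in Ioc (a t) (b t), F (t, s) := by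
  have hS : MeasurableSet {p : ℝ × ℝ | p.2 ∈ Ioc (a p.1) (b p.1)} :=
    (measurableSet_lt (ha.comp measurable_fst) measurable_snd).inter
      (measurableSet_le measurable_snd (hb.comp measurable_fst))
  have hG := (hF.indicator hS).stronglyMeasurable.integral_prod_right' (ν := volume)
  convert hG.measurable using 2 with t
  rw [← MeasureTheory.integral_indicator measurableSet_Ioc]
  rfl

theorem measurable_conv {f g : ℝ → ℝ} (hf : Measurable f) (hg : Measurable g) :
    Measurable (conv f g) := by
  have hF : Measurable fun p : ℝ × ℝ => f (p.1 - p.2) * g p.2 := by fun_prop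
  exact (measurable_setIntegral_Ioc hF measurable_const measurable_id).sub
    (measurable_setIntegral_Ioc hF measurable_id measurable_const)

theorem measurable_convPow {h : ℝ → ℝ} (hh : Measurable h) (n : ℕ) :
    Measurable (convPow h n) := by
  induction n with
  | zero => exact hh
  | succ n ih => exact measurable_conv ih hh

theorem conv_nonneg {f g : ℝ → ℝ} (hf : ∀ t, 0 ≤ t → 0 ≤ f t) (hg : ∀ t, 0 ≤ t → 0 ≤ g t)
    {t : ℝ} (ht : 0 ≤ t) : 0 ≤ conv f g t :=
  integral_nonneg ht fun _ hs => mul_nonneg (hf _ (sub_nonneg.2 hs.2)) (hg _ hs.1)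

theorem convPow_nonneg {h : ℝ → ℝ} (hh : ∀ t, 0 ≤ t → 0 ≤ h t) (n : ℕ) :
    ∀ t, 0 ≤ t → 0 ≤ convPow h n t := by
  induction n with
  | zero => exact hh
  | succ n ih => exact fun t => conv_nonneg ih hh

theorem ofReal_integral_le_lintegral_ofReal {α : Type*} [MeasurableSpace α] {μ : Measure α}
    {f : α → ℝ} (hf : 0 ≤ᵐ[μ] f) :
    ENNReal.ofReal (∫ a, f a ∂μ) ≤ ∫⁻ a, ENNReal.ofReal (f a) ∂μ := by
  by_cases hfi : Integrable f μ
  · exact (ofReal_integral_eq_lintegral_ofReal hfi hf).le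
  · simp [integral_undef hfi]

theorem ae_mem_prod_restrict {α β : Type*} [MeasurableSpace α] [MeasurableSpace β]
    {μ : Measure α} {ν : Measure β} [SFinite μ] [SFinite ν] {s : Set α} {t : Set β}
    (hs : MeasurableSet s) (ht : MeasurableSet t) :
    ∀ᵐ z ∂(μ.restrict s).prod (ν.restrict t), z ∈ s ×ˢ t := by
  rw [Measure.prod_restrict]
  exact ae_restrict_mem (hs.prod ht)

theorem Real.rpow_add_le_weighted_sum_rpow {r a b u v : ℝ} (hr : 0 ≤ r) (ha : 0 < a)
    (hb : 0 < b) (hu : 0 ≤ u) (hv : 0 ≤ v) :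
    (u + v) ^ r
      ≤ ((a + b) / a) ^ (max r 1 - 1) * u ^ r + ((a + b) / b) ^ (max r 1 - 1) * v ^ r := by
  rcases le_or_gt r 1 with hr1 | hr1
  · simpa [max_eq_right hr1] using Real.rpow_add_le_add_rpow hu hv hr hr1
  rw [max_eq_left hr1.le]
  have hab : 0 < a + b := add_pos ha hb
  have hconv := (convexOn_rpow hr1.le).2 (mem_Ici.2 (by positivity : 0 ≤ (a + b) / a * u))
    (mem_Ici.2 (by positivity : 0 ≤ (a + b) / b * v)) (div_pos ha hab).le (div_pos hb hab).le
    (by field_simp)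
  have hsum : a / (a + b) * ((a + b) / a * u) + b / (a + b) * ((a + b) / b * v) = u + v := by
    field_simp
  simp only [smul_eq_mul, hsum] at hconv
  refine hconv.trans_eq ?_
  rw [Real.mul_rpow (by positivity) hu, Real.mul_rpow (by positivity) hv,
    Real.rpow_sub_one (by positivity), Real.rpow_sub_one (by positivity)]
  field_simp

theorem summable_rpow_mul_geometric {p α : ℝ} (hα0 : 0 ≤ α) (hα1 : α < 1) :
    Summable fun n : ℕ => ((n : ℝ) + 1) ^ p * α ^ n := by
  set k := ⌈p⌉₊
  refine (summable_descFactorial_mul_geometric_of_norm_lt_one k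
    (by rwa [Real.norm_of_nonneg hα0])).of_nonneg_of_le (fun n => by positivity) fun n => ?_
  gcongr
  calc ((n : ℝ) + 1) ^ p ≤ ((n : ℝ) + 1) ^ (k : ℝ) :=
        Real.rpow_le_rpow_of_exponent_le (by simp) (Nat.le_ceil p)
    _ = ((n + 1 : ℕ) : ℝ) ^ k := by norm_cast
    _ ≤ _ := by
        have := Nat.pow_sub_le_descFactorial (n + k) k
        rw [Nat.add_right_comm, Nat.add_sub_cancel] at this
        exact_mod_cast this

noncomputable def emoment (r : ℝ) (f : ℝ → ℝ) : ℝ≥0∞ :=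
  ∫⁻ x in Ioi 0, ENNReal.ofReal (x ^ r * f x)

theorem emoment_zero (f : ℝ → ℝ) : emoment 0 f = ∫⁻ x in Ioi 0, ENNReal.ofReal (f x) := by
  simp [emoment]

theorem rpow_mul_nonneg_ae {f : ℝ → ℝ} (hf0 : ∀ t, 0 ≤ t → 0 ≤ f t) (r : ℝ) :
    0 ≤ᵐ[volume.restrict (Ioi 0)] fun x => x ^ r * f x :=
  (ae_restrict_iff' measurableSet_Ioi).2 <| .of_forall fun x hx =>
    mul_nonneg (Real.rpow_nonneg (le_of_lt hx) r) (hf0 x (le_of_lt hx))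

theorem setIntegral_rpow_mul_eq_toReal_emoment {f : ℝ → ℝ} (hf : Measurable f)
    (hf0 : ∀ t, 0 ≤ t → 0 ≤ f t) (r : ℝ) :
    ∫ x in Ioi 0, x ^ r * f x = (emoment r f).toReal :=
  integral_eq_lintegral_of_nonneg_ae (rpow_mul_nonneg_ae hf0 r) (by fun_prop)

theorem emoment_conv_le {f g : ℝ → ℝ} (hf : Measurable f) (hg : Measurable g)
    (hf0 : ∀ t, 0 ≤ t → 0 ≤ f t) (hg0 : ∀ t, 0 ≤ t → 0 ≤ g t) (r : ℝ) :
    emoment r (conv f g) ≤ ∫⁻ z, ENNReal.ofReal ((z.1 + z.2) ^ r * f z.1 * g z.2)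
      ∂(volume.restrict (Ioi 0)).prod (volume.restrict (Ioi 0)) := by
  set F : ℝ × ℝ → ℝ≥0∞ := fun z => ENNReal.ofReal ((z.1 + z.2) ^ r * f z.1 * g z.2)
  set K : ℝ × ℝ → ℝ≥0∞ := {p | p.2 ∈ Ioc 0 p.1}.indicator fun p => F (p.1 - p.2, p.2)
  have hF : Measurable F := by fun_prop
  have hK : Measurable K :=
    (hF.comp (by fun_prop)).indicator ((measurableSet_lt measurable_const measurable_snd).inter
      (measurableSet_le measurable_snd measurable_fst))
  have hpointwise : ∀ x ∈ Ioi (0 : ℝ), ENNReal.ofReal (x ^ r * conv f g x) ≤ ∫⁻ s, K (x, s) := by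
    intro x hx
    have hnonneg : 0 ≤ᵐ[volume.restrict (Ioc 0 x)] fun s => x ^ r * (f (x - s) * g s) :=
      (ae_restrict_iff' measurableSet_Ioc).2 <| .of_forall fun s hs =>
        mul_nonneg (Real.rpow_nonneg (le_of_lt hx) r)
          (mul_nonneg (hf0 _ (sub_nonneg.2 hs.2)) (hg0 _ hs.1.le))
    rw [conv, integral_of_le (le_of_lt hx), ← MeasureTheory.integral_const_mul]
    refine (ofReal_integral_le_lintegral_ofReal hnonneg).trans_eq ?_
    rw [← lintegral_indicator measurableSet_Ioc]
    congr 1 with s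
    simp only [K, F, indicator_apply, mem_Ioc, mem_ofPred_eq, sub_add_cancel, mul_assoc]
  calc emoment r (conv f g) ≤ ∫⁻ x in Ioi 0, ∫⁻ s, K (x, s) :=
        setLIntegral_mono' measurableSet_Ioi hpointwise
    _ ≤ ∫⁻ x, ∫⁻ s, K (x, s) := setLIntegral_le_lintegral _ _
    _ = ∫⁻ p, K p ∂volume.prod volume := (lintegral_prod K hK.aemeasurable).symm
    _ = ∫⁻ q, K (q.1 + q.2, q.2) ∂volume.prod volume :=
        ((measurePreserving_add_prod volume volume).lintegral_comp hK).symm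
    _ = ∫⁻ q, (Ici 0 ×ˢ Ioi 0).indicator F q ∂volume.prod volume := by
        congr 1 with q
        simp only [K, indicator_apply, mem_ofPred_eq, mem_Ioc, mem_prod, mem_Ici, mem_Ioi,
          add_sub_cancel_right, le_add_iff_nonneg_left, and_comm]
    _ = _ := by
        rw [lintegral_indicator (measurableSet_Ici.prod measurableSet_Ioi), ← Measure.prod_restrict,
          ← restrict_Ioi_eq_restrict_Ici]

theorem emoment_zero_conv_le {f g : ℝ → ℝ} (hf : Measurable f) (hg : Measurable g)
    (hf0 : ∀ t, 0 ≤ t → 0 ≤ f t) (hg0 : ∀ t, 0 ≤ t → 0 ≤ g t) :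
    emoment 0 (conv f g) ≤ emoment 0 f * emoment 0 g := by
  refine (emoment_conv_le hf hg hf0 hg0 0).trans_eq ?_
  rw [emoment, emoment, ← lintegral_prod_mul (by fun_prop) (by fun_prop)]
  refine lintegral_congr_ae ((ae_mem_prod_restrict measurableSet_Ioi measurableSet_Ioi).mono
    fun z ⟨hu, _⟩ => ?_)
  simp only [Real.rpow_zero, one_mul]
  exact ENNReal.ofReal_mul (hf0 _ (le_of_lt hu))

theorem ofReal_rpow_add_mul_mul_le {r a b u v x y : ℝ} (hr : 0 ≤ r) (ha : 0 < a) (hb : 0 < b)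
    (hu : 0 ≤ u) (hv : 0 ≤ v) (hx : 0 ≤ x) (hy : 0 ≤ y) :
    ENNReal.ofReal ((u + v) ^ r * x * y)
      ≤ ENNReal.ofReal (((a + b) / a) ^ (max r 1 - 1))
          * (ENNReal.ofReal (u ^ r * x) * ENNReal.ofReal y)
        + ENNReal.ofReal (((a + b) / b) ^ (max r 1 - 1))
          * (ENNReal.ofReal x * ENNReal.ofReal (v ^ r * y)) := by
  have hur : 0 ≤ u ^ r := Real.rpow_nonneg hu r
  have hvr : 0 ≤ v ^ r := Real.rpow_nonneg hv r
  rw [← ENNReal.ofReal_mul (by positivity), ← ENNReal.ofReal_mul (by positivity),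
    ← ENNReal.ofReal_mul (by positivity), ← ENNReal.ofReal_mul (by positivity),
    ← ENNReal.ofReal_add (by positivity) (by positivity)]
  refine ENNReal.ofReal_le_ofReal ?_
  calc (u + v) ^ r * x * y
      ≤ (((a + b) / a) ^ (max r 1 - 1) * u ^ r + ((a + b) / b) ^ (max r 1 - 1) * v ^ r)
          * x * y := by
        gcongr
        exact Real.rpow_add_le_weighted_sum_rpow hr ha hb hu hv
    _ = _ := by ring

theorem emoment_conv_le_weighted {f g : ℝ → ℝ} (hf : Measurable f) (hg : Measurable g)
    (hf0 : ∀ t, 0 ≤ t → 0 ≤ f t) (hg0 : ∀ t, 0 ≤ t → 0 ≤ g t) {r a b : ℝ} (hr : 0 ≤ r)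
    (ha : 0 < a) (hb : 0 < b) :
    emoment r (conv f g)
      ≤ ENNReal.ofReal (((a + b) / a) ^ (max r 1 - 1)) * (emoment r f * emoment 0 g)
        + ENNReal.ofReal (((a + b) / b) ^ (max r 1 - 1)) * (emoment 0 f * emoment r g) := by
  refine (emoment_conv_le hf hg hf0 hg0 r).trans ?_
  calc _ ≤ ∫⁻ z, ENNReal.ofReal (((a + b) / a) ^ (max r 1 - 1))
          * (ENNReal.ofReal (z.1 ^ r * f z.1) * ENNReal.ofReal (g z.2))
        + ENNReal.ofReal (((a + b) / b) ^ (max r 1 - 1))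
          * (ENNReal.ofReal (f z.1) * ENNReal.ofReal (z.2 ^ r * g z.2))
          ∂(volume.restrict (Ioi 0)).prod (volume.restrict (Ioi 0)) :=
        lintegral_mono_ae <| (ae_mem_prod_restrict measurableSet_Ioi measurableSet_Ioi).mono
          fun z ⟨hu, hv⟩ => ofReal_rpow_add_mul_mul_le hr ha hb (le_of_lt hu) (le_of_lt hv)
            (hf0 _ (le_of_lt hu)) (hg0 _ (le_of_lt hv))
    _ = _ := by
        rw [lintegral_add_left (by fun_prop), lintegral_const_mul _ (by fun_prop),
          lintegral_const_mul _ (by fun_prop), emoment_zero, emoment_zero, emoment, emoment,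
          ← lintegral_prod_mul (by fun_prop) (by fun_prop),
          ← lintegral_prod_mul (by fun_prop) (by fun_prop)]

theorem emoment_zero_convPow_le {h : ℝ → ℝ} (hh : Measurable h) (hh0 : ∀ t, 0 ≤ t → 0 ≤ h t)
    (n : ℕ) : emoment 0 (convPow h n) ≤ emoment 0 h ^ (n + 1) := by
  induction n with
  | zero => simp [convPow]
  | succ n ih =>
    calc emoment 0 (convPow h (n + 1)) ≤ emoment 0 (convPow h n) * emoment 0 h :=
          emoment_zero_conv_le (measurable_convPow hh n) hh (convPow_nonneg hh0 n) hh0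
      _ ≤ emoment 0 h ^ (n + 1 + 1) := by
          rw [pow_succ _ (n + 1)]
          gcongr

theorem emoment_convPow_le {h : ℝ → ℝ} (hh : Measurable h) (hh0 : ∀ t, 0 ≤ t → 0 ≤ h t)
    {r : ℝ} (hr : 0 ≤ r) (n : ℕ) :
    emoment r (convPow h n)
      ≤ ENNReal.ofReal (((n : ℝ) + 1) ^ max r 1) * emoment 0 h ^ n * emoment r h := by
  induction n with
  | zero => simp [convPow]
  | succ n ih =>
    have hx : (0 : ℝ) < n + 1 := by positivity
    have hcoeff : (((n : ℝ) + 1 + 1) / ((n : ℝ) + 1)) ^ (max r 1 - 1) * ((n : ℝ) + 1) ^ max r 1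
        + (((n : ℝ) + 1 + 1) / 1) ^ (max r 1 - 1) = ((n : ℝ) + 1 + 1) ^ max r 1 := by
      rw [div_one, Real.div_rpow (by positivity) hx.le, Real.rpow_sub_one hx.ne',
        Real.rpow_sub_one (by positivity)]
      have : 0 < ((n : ℝ) + 1) ^ max r 1 := by positivity
      field_simp
    calc emoment r (convPow h (n + 1))
        ≤ _ := emoment_conv_le_weighted (measurable_convPow hh n) hh (convPow_nonneg hh0 n) hh0
          hr hx one_pos
      _ ≤ ENNReal.ofReal ((((n : ℝ) + 1 + 1) / ((n : ℝ) + 1)) ^ (max r 1 - 1))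
            * (ENNReal.ofReal (((n : ℝ) + 1) ^ max r 1) * emoment 0 h ^ n * emoment r h
              * emoment 0 h)
          + ENNReal.ofReal ((((n : ℝ) + 1 + 1) / 1) ^ (max r 1 - 1))
            * (emoment 0 h ^ (n + 1) * emoment r h) := by
        gcongr
        exact emoment_zero_convPow_le hh hh0 n
      _ = ENNReal.ofReal ((((n + 1 : ℕ) : ℝ) + 1) ^ max r 1) * emoment 0 h ^ (n + 1)
            * emoment r h := by
        rw [Nat.cast_succ, ← hcoeff, ENNReal.ofReal_add (by positivity) (by positivity),
          ENNReal.ofReal_mul (by positivity)]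
        ring

theorem integrableOn_rpow_mul_tsum {f : ℕ → ℝ → ℝ} (hf : ∀ n, Measurable (f n))
    (hf0 : ∀ n t, 0 ≤ t → 0 ≤ f n t) {r : ℝ} (hsum : ∑' n, emoment r (f n) ≠ ⊤) :
    IntegrableOn (fun x => x ^ r * ∑' n, f n x) (Ioi 0) := by
  have hint : IntegrableOn (fun x => (∑' n, ENNReal.ofReal (x ^ r * f n x)).toReal) (Ioi 0) :=
    integrable_toReal_of_lintegral_ne_top (by fun_prop)
      (by rwa [lintegral_tsum fun n => by fun_prop])
  refine hint.congr_fun (fun x hx => ?_) measurableSet_Ioi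
  have hnonneg n : 0 ≤ x ^ r * f n x :=
    mul_nonneg (Real.rpow_nonneg (le_of_lt hx) r) (hf0 n x (le_of_lt hx))
  simp only [ENNReal.tsum_toReal_eq fun _ => ENNReal.ofReal_ne_top,
    ENNReal.toReal_ofReal (hnonneg _), tsum_mul_left]

open Real in
/-- If `h ≥ 0` is measurable with `∫₀^∞ h = α < 1` and `∫₀^∞ x^r h(x) dx < ∞` for some
`r > 0`, then `∫₀^∞ x^r ψ(x) dx < ∞` where `ψ = Σ_{n≥1} h^{*n}`, with the explicit bound
`∫₀^∞ x^r h^{*n}(x) dx ≤ n^{max r 1} α^{n-1} ∫₀^∞ x^r h(x) dx`. -/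
theorem moment_psi_finite
    (h : ℝ → ℝ) (α r : ℝ)
    (hmeas : Measurable h) (hnonneg : ∀ t, 0 ≤ h t)
    (hint : IntegrableOn h (Set.Ioi 0))
    (hα : α = ∫ t in Set.Ioi (0:ℝ), h t) (hα1 : α < 1)
    (hr : 0 < r)
    (hmom : IntegrableOn (fun x => x ^ r * h x) (Set.Ioi 0)) :
    (∀ n : ℕ, ∫ x in Set.Ioi (0:ℝ), x ^ r * convPow h n x
        ≤ ((n : ℝ) + 1) ^ max r 1 * α ^ n * ∫ x in Set.Ioi (0:ℝ), x ^ r * h x) ∧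
      IntegrableOn (fun x => x ^ r * (∑' n : ℕ, convPow h n x)) (Set.Ioi 0) := by
  set M := ∫ x in Ioi (0 : ℝ), x ^ r * h x
  have hh0 : ∀ t, 0 ≤ t → 0 ≤ h t := fun t _ => hnonneg t
  have hα0 : 0 ≤ α := hα ▸ setIntegral_nonneg measurableSet_Ioi fun t _ => hnonneg t
  have hM0 : 0 ≤ M := integral_nonneg_of_ae (rpow_mul_nonneg_ae hh0 r)
  have hmass : emoment 0 h = ENNReal.ofReal α := by
    rw [emoment_zero, hα, ofReal_integral_eq_lintegral_ofReal hint (.of_forall hnonneg)]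
  have hmoment : emoment r h = ENNReal.ofReal M :=
    (ofReal_integral_eq_lintegral_ofReal hmom (rpow_mul_nonneg_ae hh0 r)).symm
  have hbound n :
      emoment r (convPow h n) ≤ ENNReal.ofReal (((n : ℝ) + 1) ^ max r 1 * α ^ n * M) := by
    rw [ENNReal.ofReal_mul (by positivity), ENNReal.ofReal_mul (by positivity),
      ENNReal.ofReal_pow hα0, ← hmass, ← hmoment]
    exact emoment_convPow_le hmeas hh0 hr.le n
  refine ⟨fun n => ?_, integrableOn_rpow_mul_tsum (measurable_convPow hmeas)
    (convPow_nonneg hh0) ?_⟩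
  · rw [setIntegral_rpow_mul_eq_toReal_emoment (measurable_convPow hmeas n) (convPow_nonneg hh0 n)]
    exact ENNReal.toReal_le_of_le_ofReal (by positivity) (hbound n)
  · exact ne_top_of_le_ne_top
      ((summable_rpow_mul_geometric hα0 hα1).mul_right M).tsum_ofReal_ne_top
      (ENNReal.tsum_le_tsum hbound)
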